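/- arXiv:2604.13393 — 4 statements merged into one kernel-verified Lean document; each statement's English description precedes it below -/
import Mathlib

section
/- Let f : ℝ^d → ℝ be C^4 near 0 with f(0) = 0, ∇f(0) = 0, and suppose there exist m₀ > 0 and ρ₀ > 0 with f(x) ≥ m₀‖x‖⁴ for all ‖x‖ ≤ ρ₀. Then for every u in the null space of the Hessian H = ∇²f(0), the third derivative satisfies ∇³f(0)[u,u,u] = 0. -/
/-!
Restricted to the line `t ↦ t • u`, `f` has vanishing derivatives of order `≤ 2` at `0` (the
second one because `u ∈ ker H`), so Taylor's theorem gives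
`f (t • u) = t³/6 · D³f(0)[u,u,u] + o(t³)`. A nonzero cubic coefficient would make `f (t • u)`
negative for small `t` of one sign, while `f ≥ m₀‖x‖⁴ ≥ 0` near `0`.
-/

open Filter Topology
open scoped Gradient Nat

theorem tendsto_div_pow_of_iteratedDeriv_eq_zero {g : ℝ → ℝ} {x₀ : ℝ} {n : ℕ}
    (hg : ContDiffAt ℝ n g x₀) (hlow : ∀ k < n, iteratedDeriv k g x₀ = 0) :
    Tendsto (fun x ↦ g x / (x - x₀) ^ n) (𝓝[≠] x₀) (𝓝 (iteratedDeriv n g x₀ / n !)) := by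
  obtain ⟨v, hv, hgv⟩ := hg.contDiffOn le_rfl (by simp)
  obtain ⟨ε, hε, hball⟩ := Metric.mem_nhds_iff.1 hv
  have hx₀ : x₀ ∈ Metric.ball x₀ ε := Metric.mem_ball_self hε
  have hderiv (k : ℕ) : iteratedDerivWithin k g (Metric.ball x₀ ε) x₀ = iteratedDeriv k g x₀ :=
    iteratedDerivWithin_of_isOpen Metric.isOpen_ball hx₀
  have htaylor (x : ℝ) :
      taylorWithinEval g n (Metric.ball x₀ ε) x₀ x = iteratedDeriv n g x₀ / n ! * (x - x₀) ^ n := by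
    rw [taylor_within_apply, Finset.sum_range_succ,
      Finset.sum_eq_zero fun k hk ↦ by rw [hderiv, hlow k (Finset.mem_range.1 hk), smul_zero],
      zero_add, hderiv, smul_eq_mul]
    ring
  have hrem := Real.taylor_tendsto (convex_ball x₀ ε) hx₀ (hgv.mono hball)
  rw [Metric.isOpen_ball.nhdsWithin_eq hx₀] at hrem
  have hlim :=
    (hrem.mono_left (nhdsWithin_le_nhds (s := {x₀}ᶜ))).add_const (iteratedDeriv n g x₀ / n !)
  rw [zero_add] at hlim
  refine hlim.congr' ?_
  filter_upwards [self_mem_nhdsWithin] with x hx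
  have hpow : (x - x₀) ^ n ≠ 0 := pow_ne_zero _ (sub_ne_zero.2 hx)
  rw [htaylor]
  field_simp
  ring

theorem Odd.iteratedDeriv_eq_zero_of_eventually_nonneg {g : ℝ → ℝ} {x₀ : ℝ} {n : ℕ}
    (hn : Odd n) (hg : ContDiffAt ℝ n g x₀) (hlow : ∀ k < n, iteratedDeriv k g x₀ = 0)
    (hnonneg : ∀ᶠ x in 𝓝 x₀, 0 ≤ g x) : iteratedDeriv n g x₀ = 0 := by
  have hlim := tendsto_div_pow_of_iteratedDeriv_eq_zero hg hlow
  have hright : 0 ≤ iteratedDeriv n g x₀ / n ! := by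
    refine ge_of_tendsto (hlim.mono_left (nhdsGT_le_nhdsNE x₀)) ?_
    filter_upwards [nhdsWithin_le_nhds hnonneg, self_mem_nhdsWithin] with x hgx hx
    exact div_nonneg hgx (pow_nonneg (sub_nonneg.2 (le_of_lt hx)) _)
  have hleft : iteratedDeriv n g x₀ / n ! ≤ 0 := by
    refine le_of_tendsto (hlim.mono_left (nhdsLT_le_nhdsNE x₀)) ?_
    filter_upwards [nhdsWithin_le_nhds hnonneg, self_mem_nhdsWithin] with x hgx hx
    exact div_nonpos_of_nonneg_of_nonpos hgx (hn.pow_nonpos_iff.2 (sub_nonpos.2 (le_of_lt hx)))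
  simpa [Nat.factorial_ne_zero] using le_antisymm hleft hright

variable {𝕜 : Type*} [NontriviallyNormedField 𝕜] {E F G : Type*} [NormedAddCommGroup E]
  [NormedSpace 𝕜 E] [NormedAddCommGroup F] [NormedSpace 𝕜 F] [NormedAddCommGroup G]
  [NormedSpace 𝕜 G]

theorem ContinuousLinearMap.iteratedFDeriv_comp_right_of_contDiffAt (g : G →L[𝕜] E) {f : E → F}
    {x : G} {n : WithTop ℕ∞} (hf : ContDiffAt 𝕜 n f (g x)) {i : ℕ} (hi : i ≤ n) :
    iteratedFDeriv 𝕜 i (f ∘ g) x =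
      (iteratedFDeriv 𝕜 i f (g x)).compContinuousLinearMap fun _ ↦ g := by
  obtain ⟨v, hv, hfv⟩ := hf.contDiffOn hi (by simp)
  obtain ⟨U, hUv, hUo, hxU⟩ := mem_nhds_iff.1 hv
  have hgUo : IsOpen (g ⁻¹' U) := hUo.preimage g.continuous
  rw [← iteratedFDerivWithin_of_isOpen i hgUo hxU, ← iteratedFDerivWithin_of_isOpen i hUo hxU]
  exact g.iteratedFDerivWithin_comp_right (hfv.mono hUv) hUo.uniqueDiffOn hgUo.uniqueDiffOn hxU
    le_rfl

theorem iteratedDeriv_comp_smul_right {f : E → F} {u : E} {t : 𝕜} {n : WithTop ℕ∞}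
    (hf : ContDiffAt 𝕜 n f (t • u)) {i : ℕ} (hi : i ≤ n) :
    iteratedDeriv i (fun s : 𝕜 ↦ f (s • u)) t = iteratedFDeriv 𝕜 i f (t • u) fun _ ↦ u := by
  rw [iteratedDeriv_eq_iteratedFDeriv]
  have := (ContinuousLinearMap.toSpanSingleton 𝕜 u).iteratedFDeriv_comp_right_of_contDiffAt hf hi
  exact congr($this fun _ ↦ 1).trans (by simp)

/-- fourth-order growth kills the cubic along the null space of the Hessian. -/
theorem null_space_cubic_vanishes
    {d : ℕ} (f : EuclideanSpace ℝ (Fin d) → ℝ)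
    (hf : ContDiffAt ℝ 4 f 0) (hf0 : f 0 = 0) (hg0 : ∇ f 0 = 0)
    (m₀ ρ₀ : ℝ) (hm₀ : 0 < m₀) (hρ₀ : 0 < ρ₀)
    (hgrowth : ∀ x : EuclideanSpace ℝ (Fin d), ‖x‖ ≤ ρ₀ → m₀ * ‖x‖ ^ 4 ≤ f x)
    (u : EuclideanSpace ℝ (Fin d)) (hu : fderiv ℝ (∇ f) 0 u = 0) :
    iteratedFDeriv ℝ 3 f 0 ![u, u, u] = 0 := by
  have hfd : fderiv ℝ f 0 = 0 := by rw [← toDual_gradient, hg0, map_zero]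
  have hHu : fderiv ℝ (fderiv ℝ f) 0 u = 0 := by
    rw [← toDual_comp_gradient, LinearIsometryEquiv.comp_fderiv, ContinuousLinearMap.comp_apply,
      hu, map_zero]
  have hf3 : ContDiffAt ℝ 3 f ((0 : ℝ) • u) := by rw [zero_smul]; exact hf.of_le (by norm_num)
  have hline (k : ℕ) (hk : k ≤ 3) :
      iteratedDeriv k (fun t : ℝ ↦ f (t • u)) 0 = iteratedFDeriv ℝ k f 0 fun _ ↦ u := by
    simpa using iteratedDeriv_comp_smul_right hf3 (by exact_mod_cast hk)
  have hlow (k : ℕ) (hk : k < 3) : iteratedDeriv k (fun t : ℝ ↦ f (t • u)) 0 = 0 := by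
    rw [hline k hk.le]
    interval_cases k
    · simpa using hf0
    · simp [hfd]
    · simp [iteratedFDeriv_two_apply, hHu]
  have hnonneg : ∀ᶠ t in 𝓝 (0 : ℝ), 0 ≤ f (t • u) := by
    have hfnonneg : ∀ᶠ x in 𝓝 0, 0 ≤ f x := by
      filter_upwards [Metric.closedBall_mem_nhds 0 hρ₀] with x hx
      exact (by positivity : 0 ≤ m₀ * ‖x‖ ^ 4).trans (hgrowth x (mem_closedBall_zero_iff.1 hx))
    have hsmul : Tendsto (fun t : ℝ ↦ t • u) (𝓝 0) (𝓝 0) := by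
      simpa using (tendsto_id (x := 𝓝 (0 : ℝ))).smul_const u
    exact hsmul hfnonneg
  have hline3 : ContDiffAt ℝ 3 (fun t : ℝ ↦ f (t • u)) 0 :=
    hf3.comp (g := f) (0 : ℝ) (by fun_prop)
  have hcubic := (by decide : Odd 3).iteratedDeriv_eq_zero_of_eventually_nonneg hline3 hlow hnonneg
  rw [hline 3 le_rfl] at hcubic
  convert hcubic using 2
  ext i
  fin_cases i <;> rfl
end

section
/- Let f : ℝ^d → ℝ be differentiable with f(0) = 0, satisfying the aiming inequality ⟨∇f(x), x⟩ ≥ f(x), the fourth-order growth f(x) ≥ m₀‖x‖⁴, and the ratio condition f(x) ≥ τ‖∇f(x)‖^{4/3} at a point x with ∇f(x) ≠ 0, where m₀, τ > 0 and τ^{3/2}√m₀ < 1. Then the Polyak step x⁺ = x − (f(x)/‖∇f(x)‖²)∇f(x) satisfies ‖x⁺‖ ≤ √(1 − τ^{3/2}√m₀) · ‖x‖. -/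
open scoped Gradient RealInnerProductSpace

/-- in the fourth-power regime (`R(x) ≥ τ`), a Polyak step contracts the
distance by the factor `√(1 − τ^{3/2}√m₀)`. -/
theorem polyak_step_contraction
    {d : ℕ} (f : EuclideanSpace ℝ (Fin d) → ℝ)
    (x : EuclideanSpace ℝ (Fin d))
    (hdiff : DifferentiableAt ℝ f x)
    (hf0 : f 0 = 0)
    (haim : f x ≤ ⟪∇ f x, x⟫)
    (m₀ τ : ℝ) (hm₀ : 0 < m₀) (hτ : 0 < τ)
    (hsmall : τ ^ ((3 : ℝ) / 2) * Real.sqrt m₀ < 1)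
    (hgrowth : m₀ * ‖x‖ ^ 4 ≤ f x)
    (hratio : τ * ‖∇ f x‖ ^ ((4 : ℝ) / 3) ≤ f x)
    (hgx : ∇ f x ≠ 0) :
    ‖x - (f x / ‖∇ f x‖ ^ 2) • ∇ f x‖ ≤
      Real.sqrt (1 - τ ^ ((3 : ℝ) / 2) * Real.sqrt m₀) * ‖x‖ := by
  set g := ∇ f x with hg
  set G := ‖g‖ with hGdef
  have hG : 0 < G := norm_pos_iff.mpr hgx
  have hF : 0 < f x :=
    lt_of_lt_of_le (mul_pos hτ (Real.rpow_pos_of_pos hG _)) hratio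
  set c := τ ^ ((3 : ℝ) / 2) * Real.sqrt m₀ with hc
  have hc0 : 0 < c := mul_pos (Real.rpow_pos_of_pos hτ _) (Real.sqrt_pos.mpr hm₀)
  -- G^2 ≤ (f x)^(3/2) / τ^(3/2)
  have hG2 : G ^ 2 ≤ (f x) ^ ((3:ℝ)/2) / τ ^ ((3:ℝ)/2) := by
    have h1 : G ^ ((4:ℝ)/3) ≤ f x / τ := by
      rw [le_div_iff₀ hτ]; linarith [hratio]
    have h2 := Real.rpow_le_rpow (Real.rpow_nonneg (norm_nonneg g) _) h1
      (by norm_num : (0:ℝ) ≤ (3:ℝ)/2)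
    calc (G:ℝ) ^ 2 = (G ^ ((4:ℝ)/3)) ^ ((3:ℝ)/2) := by
          rw [← Real.rpow_natCast G 2, ← Real.rpow_mul (norm_nonneg g)]; norm_num; rfl
      _ ≤ (f x / τ) ^ ((3:ℝ)/2) := h2
      _ = (f x) ^ ((3:ℝ)/2) / τ ^ ((3:ℝ)/2) := Real.div_rpow hF.le hτ.le _
  -- √m₀ * ‖x‖^2 ≤ (f x)^(1/2)
  have hsq : Real.sqrt m₀ * ‖x‖ ^ 2 ≤ (f x) ^ ((1:ℝ)/2) := by
    have : Real.sqrt (m₀ * ‖x‖ ^ 4) ≤ Real.sqrt (f x) := Real.sqrt_le_sqrt hgrowth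
    rw [Real.sqrt_mul hm₀.le, show ‖x‖^4 = (‖x‖^2)^2 by ring,
      Real.sqrt_sq (sq_nonneg _)] at this
    rwa [← Real.sqrt_eq_rpow]
  -- key: c * ‖x‖^2 * G^2 ≤ (f x)^2
  have hkey : c * ‖x‖ ^ 2 * G ^ 2 ≤ (f x) ^ 2 := by
    have hG2' := hG2
    have hτpos : (0:ℝ) < τ ^ ((3:ℝ)/2) := Real.rpow_pos_of_pos hτ _
    have h3 : c * ‖x‖ ^ 2 * G ^ 2 ≤
        (τ ^ ((3:ℝ)/2) * Real.sqrt m₀ * ‖x‖ ^ 2) * ((f x) ^ ((3:ℝ)/2) / τ ^ ((3:ℝ)/2)) := by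
      apply mul_le_mul_of_nonneg_left hG2'
      positivity
    have h4 : (τ ^ ((3:ℝ)/2) * Real.sqrt m₀ * ‖x‖ ^ 2) * ((f x) ^ ((3:ℝ)/2) / τ ^ ((3:ℝ)/2))
        = (Real.sqrt m₀ * ‖x‖ ^ 2) * (f x) ^ ((3:ℝ)/2) := by
      field_simp
    have h5 : (Real.sqrt m₀ * ‖x‖ ^ 2) * (f x) ^ ((3:ℝ)/2) ≤
        (f x) ^ ((1:ℝ)/2) * (f x) ^ ((3:ℝ)/2) := by
      apply mul_le_mul_of_nonneg_right hsq (Real.rpow_nonneg hF.le _)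
    have h6 : (f x) ^ ((1:ℝ)/2) * (f x) ^ ((3:ℝ)/2) = (f x) ^ 2 := by
      rw [← Real.rpow_add hF]
      norm_num
    calc c * ‖x‖ ^ 2 * G ^ 2 ≤ _ := h3
      _ = _ := h4
      _ ≤ _ := h5
      _ = _ := h6
  -- norm squared bound
  have hG2ne : (G:ℝ) ^ 2 ≠ 0 := by positivity
  have hnorm : ‖x - (f x / G ^ 2) • g‖ ^ 2 ≤ (1 - c) * ‖x‖ ^ 2 := by
    have hexp : ‖x - (f x / G ^ 2) • g‖ ^ 2
        = ‖x‖ ^ 2 - 2 * ((f x / G ^ 2) * ⟪g, x⟫) + (f x / G ^ 2) ^ 2 * G ^ 2 := by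
      rw [norm_sub_sq_real, real_inner_smul_right, norm_smul, real_inner_comm x g,
        Real.norm_eq_abs, abs_of_nonneg (show (0:ℝ) ≤ f x / G ^ 2 by positivity)]
      ring
    rw [hexp]
    have haim' : f x ≤ ⟪g, x⟫ := haim
    have ht : (0:ℝ) < f x / G ^ 2 := by positivity
    have hkey' : c * ‖x‖ ^ 2 ≤ (f x) ^ 2 / G ^ 2 := by
      rw [le_div_iff₀ (by positivity : (0:ℝ) < G ^ 2)]
      linarith [hkey]
    have hq : (f x / G ^ 2) ^ 2 * G ^ 2 = (f x) ^ 2 / G ^ 2 := by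
      field_simp
    have htF : (f x / G ^ 2) * f x = f x ^ 2 / G ^ 2 := by
      field_simp
    linarith [mul_le_mul_of_nonneg_left haim' (le_of_lt ht), hq, hkey', htF]
  have h1c : 0 ≤ 1 - c := by nlinarith [hsmall]
  calc ‖x - (f x / G ^ 2) • g‖ = Real.sqrt (‖x - (f x / G ^ 2) • g‖ ^ 2) := by
        rw [Real.sqrt_sq (norm_nonneg _)]
    _ ≤ Real.sqrt ((1 - c) * ‖x‖ ^ 2) := Real.sqrt_le_sqrt hnorm
    _ = Real.sqrt (1 - c) * ‖x‖ := by
        rw [Real.sqrt_mul h1c, Real.sqrt_sq (norm_nonneg _)]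
end

section
/- The function g : ℝ² → ℝ given by g(v,u) = ½(v + u²)² + u⁴ satisfies g(v,u) ≥ c·‖(v,u)‖⁴ for some constant c > 0 and all (v,u) in the unit ball, has ∇²g(0,0) = diag(1,0), but the projected cubic does not vanish: ∇³g(0)[e_u, e_u] = 2e_v ≠ 0, where e_u, e_v are the coordinate directions and e_u spans the null space of ∇²g(0). -/
open EuclideanSpace ContinuousLinearMap Fin

noncomputable section NQE
abbrev E2 := EuclideanSpace ℝ (Fin 2)
def p0 : E2 →L[ℝ] ℝ := EuclideanSpace.proj 0
def p1 : E2 →L[ℝ] ℝ := EuclideanSpace.proj 1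
def A00 : E2 →L[ℝ] E2 →L[ℝ] ℝ := p0.smulRight p0
def A10 : E2 →L[ℝ] E2 →L[ℝ] ℝ := p1.smulRight p0
def A01 : E2 →L[ℝ] E2 →L[ℝ] ℝ := p0.smulRight p1
def A11 : E2 →L[ℝ] E2 →L[ℝ] ℝ := p1.smulRight p1

instance instCAddE2 : ContinuousAdd (E2 →L[ℝ] E2 →L[ℝ] ℝ) :=
  @IsTopologicalAddGroup.toContinuousAdd _ _ _ (ContinuousLinearMap.topologicalAddGroup)

instance instBSMulE2 : IsBoundedSMul ℝ (E2 →L[ℝ] E2 →L[ℝ] ℝ) :=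
  @NormedSpace.toIsBoundedSMul ℝ (E2 →L[ℝ] E2 →L[ℝ] ℝ) _ _ _

def D1 (x : E2) : E2 →L[ℝ] ℝ :=
  (x 0 + x 1 * x 1) • p0 + (2 * x 0 * x 1 + 6 * (x 1 * x 1) * x 1) • p1

def D2 (x : E2) : E2 →L[ℝ] E2 →L[ℝ] ℝ :=
  A00 + (2 * x 1) • (A10 + A01) + (2 * x 0 + 18 * (x 1 * x 1)) • A11

def D3 (x : E2) : E2 →L[ℝ] E2 →L[ℝ] E2 →L[ℝ] ℝ :=
  (((2:ℝ) • p1).smulRight (A10 + A01)) +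
    (((2:ℝ) • p0 + (36 * x 1) • p1).smulRight A11)

lemma h0 (x : E2) : HasFDerivAt (fun x : E2 => x 0) p0 x := p0.hasFDerivAt
lemma h1 (x : E2) : HasFDerivAt (fun x : E2 => x 1) p1 x := p1.hasFDerivAt

lemma hD1 (x : E2) :
    HasFDerivAt (fun x : E2 => 2⁻¹ * (x 0 * x 0) + x 0 * (x 1 * x 1)
      + (3/2) * ((x 1 * x 1) * (x 1 * x 1))) (D1 x) x := by
  have h := ((((h0 x).mul (h0 x)).const_mul 2⁻¹).add
      ((h0 x).mul ((h1 x).mul (h1 x)))).add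
      ((((h1 x).mul (h1 x)).mul ((h1 x).mul (h1 x))).const_mul (3/2))
  refine h.congr_fderiv ?_
  ext y
  simp [D1, p0, p1]
  ring

set_option synthInstance.maxHeartbeats 400000 in
lemma hD2 (x : E2) : HasFDerivAt D1 (D2 x) x := by
  have hc1 : HasFDerivAt (fun x : E2 => x 0 + x 1 * x 1) (p0 + (2 * x 1) • p1) x := by
    refine ((h0 x).add ((h1 x).mul (h1 x))).congr_fderiv ?_
    ext y; simp [p0, p1]; ring
  have hc2 : HasFDerivAt (fun x : E2 => 2 * x 0 * x 1 + 6 * (x 1 * x 1) * x 1)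
      ((2 * x 1) • p0 + (2 * x 0 + 18 * (x 1 * x 1)) • p1) x := by
    have h := ((((h0 x).const_mul 2).mul (h1 x)).add
        ((((h1 x).mul (h1 x)).const_mul 6).mul (h1 x)))
    refine h.congr_fderiv ?_
    ext y; simp [p0, p1]; ring
  have h := (hc1.smul_const p0).add (hc2.smul_const p1)
  refine h.congr_fderiv ?_
  ext y z
  simp [D2, A00, A10, A01, A11, p0, p1]
  ring

set_option synthInstance.maxHeartbeats 400000 in
lemma hD3 (x : E2) : HasFDerivAt D2 (D3 x) x := by
  have hc1 : HasFDerivAt (fun x : E2 => 2 * x 1) ((2:ℝ) • p1) x := (h1 x).const_mul 2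
  have hc2 : HasFDerivAt (fun x : E2 => 2 * x 0 + 18 * (x 1 * x 1))
      ((2:ℝ) • p0 + (36 * x 1) • p1) x := by
    refine (((h0 x).const_mul 2).add (((h1 x).mul (h1 x)).const_mul 18)).congr_fderiv ?_
    ext y; simp [p0, p1]; ring
  have h := ((hasFDerivAt_const A00 x).add (hc1.smul_const (𝕜' := ℝ) (A10 + A01))).add
      (hc2.smul_const (𝕜' := ℝ) A11)
  refine h.congr_fderiv ?_
  ext y z w
  simp [D3, A00, A10, A01, A11, p0, p1]

set_option maxHeartbeats 1000000 in
set_option synthInstance.maxHeartbeats 400000 in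
/-- the nonconvex quartic example `g(v,u) = ½(v + u²)² + u⁴`. Coordinates:
`x 0 = v`, `x 1 = u`, with `e_u = EuclideanSpace.single 1 1` spanning the null space of the
Hessian `diag(1,0)`. It has fourth-order growth on the unit ball, Hessian `diag(1,0)` at
the origin, but the cubic `∇³g(0)[e_u,e_u]` equals `2 e_v ≠ 0`. -/
theorem nonconvex_quartic_example
    (g : EuclideanSpace ℝ (Fin 2) → ℝ)
    (hg : ∀ x : EuclideanSpace ℝ (Fin 2),
      g x = (1 / 2) * (x 0 + (x 1) ^ 2) ^ 2 + (x 1) ^ 4) :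
    (∃ c > 0, ∀ x : EuclideanSpace ℝ (Fin 2), ‖x‖ ≤ 1 → c * ‖x‖ ^ 4 ≤ g x) ∧
    (∀ y z : EuclideanSpace ℝ (Fin 2),
      iteratedFDeriv ℝ 2 g 0 ![y, z] = y 0 * z 0) ∧
    (∀ w : EuclideanSpace ℝ (Fin 2),
      iteratedFDeriv ℝ 3 g 0
        ![EuclideanSpace.single 1 1, EuclideanSpace.single 1 1, w] = 2 * w 0) ∧
    (2 : ℝ) • (EuclideanSpace.single 0 1 : EuclideanSpace ℝ (Fin 2)) ≠ 0 := by
  have hgf : g = fun x : E2 => 2⁻¹ * (x 0 * x 0) + x 0 * (x 1 * x 1)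
      + (3/2) * ((x 1 * x 1) * (x 1 * x 1)) := by
    funext x; rw [hg x]; ring
  have hf1 : fderiv ℝ g = D1 := by
    funext x; rw [hgf]; exact (hD1 x).fderiv
  have hf2 : fderiv ℝ (fderiv ℝ g) = D2 := by
    rw [hf1]; funext x; exact (hD2 x).fderiv
  have hf3 : fderiv ℝ (fderiv ℝ (fderiv ℝ g)) = D3 := by
    rw [hf2]; funext x; exact (hD3 x).fderiv
  refine ⟨?_, ?_, ?_, ?_⟩
  · refine ⟨1/10, by norm_num, fun x hx => ?_⟩
    have hn : ‖x‖ ^ 2 = x 0 ^ 2 + x 1 ^ 2 := by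
      rw [EuclideanSpace.norm_eq, Real.sq_sqrt (by positivity)]
      simp [Fin.sum_univ_two, Real.norm_eq_abs, sq_abs]
    have hn4 : ‖x‖ ^ 4 = (x 0 ^ 2 + x 1 ^ 2) ^ 2 := by
      rw [show (4:ℕ) = 2*2 from rfl, pow_mul, hn]
    have hle : x 0 ^ 2 + x 1 ^ 2 ≤ 1 := by
      rw [← hn]; nlinarith [norm_nonneg x]
    rw [hn4, hg x]
    have h01 : x 0 ^ 2 ≤ 1 := by nlinarith [sq_nonneg (x 1)]
    nlinarith [sq_nonneg (x 0 + x 1 ^ 2), sq_nonneg (x 0 - x 1 ^ 2), sq_nonneg (x 0),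
      sq_nonneg (x 1), sq_nonneg (x 0 ^ 2 - x 1 ^ 2), mul_self_nonneg (x 0 * x 1),
      mul_le_one₀ h01 (sq_nonneg (x 0)) h01, sq_nonneg (x 1 ^ 2)]
  · intro y z
    rw [iteratedFDeriv_two_apply, hf2]
    simp [D2, A00, A10, A01, A11, p0, p1]
  · intro w
    rw [iteratedFDeriv_succ_apply_right, iteratedFDeriv_two_apply, hf3]
    have hi0 : Fin.init ![EuclideanSpace.single 1 1, EuclideanSpace.single 1 1, w] 0
        = (EuclideanSpace.single 1 1 : E2) := rfl
    have hi1 : Fin.init ![EuclideanSpace.single 1 1, EuclideanSpace.single 1 1, w] 1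
        = (EuclideanSpace.single 1 1 : E2) := rfl
    have hl : ![EuclideanSpace.single 1 1, EuclideanSpace.single 1 1, w] (Fin.last 2) = w := rfl
    rw [hi0, hi1, hl]
    simp [D3, A00, A10, A01, A11, p0, p1, EuclideanSpace.single_apply]
  · intro h
    have : ((2:ℝ) • (EuclideanSpace.single 0 1 : E2)) 0 = 0 := by rw [h]; rfl
    simp [EuclideanSpace.single_apply] at this
end NQE
end

section
/- Let f : ℝ^d → ℝ be C⁴ near 0 with f(0) = 0, ∇f(0) = 0, and f(x) ≥ m₀‖x‖⁴ for ‖x‖ ≤ ρ₀ (m₀, ρ₀ > 0). Let Q be the orthogonal projection onto Null(∇²f(0)). Then there exist constants c, C, r > 0 such that c‖u‖³ ≤ ‖Q∇f(u)‖ ≤ C‖u‖³ for all u ∈ Null(∇²f(0)) with ‖u‖ ≤ r. -/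
set_option maxHeartbeats 1000000

open Set Metric
open scoped Gradient RealInnerProductSpace Topology

section Aux

variable {E : Type*} [NormedAddCommGroup E] [NormedSpace ℝ E]
  {F : Type*} [NormedAddCommGroup F] [NormedSpace ℝ F]

lemma itFDW_subset {f : E → F} {s t : Set E} {n : WithTop ℕ∞} (hf : ContDiffOn ℝ n f t)
    (hst : s ⊆ t) (hs : UniqueDiffOn ℝ s) (ht : UniqueDiffOn ℝ t) {x : E} (hx : x ∈ s)
    {k : ℕ} (hk : (k : WithTop ℕ∞) ≤ n) :
    iteratedFDerivWithin ℝ k f s x = iteratedFDerivWithin ℝ k f t x :=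
  (((hf.ftaylorSeriesWithin ht).mono hst).eq_iteratedFDerivWithin_of_uniqueDiffOn hk hs hx).symm

lemma itDW_eq_itD {p : ℝ → F} {n : WithTop ℕ∞} {k : ℕ} (hp : ContDiff ℝ n p)
    (hk : (k : WithTop ℕ∞) ≤ n) {s : Set ℝ} (hs : UniqueDiffOn ℝ s) {x : ℝ} (hx : x ∈ s) :
    iteratedDerivWithin k p s x = iteratedDeriv k p x := by
  rw [iteratedDerivWithin_eq_iteratedFDerivWithin, iteratedDeriv_eq_iteratedFDeriv,
    itFDW_subset hp.contDiffOn (subset_univ s) hs uniqueDiffOn_univ hx hk,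
    iteratedFDerivWithin_univ]

end Aux

section KT
variable {E : Type*} [NormedAddCommGroup E] [InnerProductSpace ℝ E]

/-- the chain computation: iterated derivatives of `t ↦ ⟪w, φ (t•u)⟫` on `Icc 0 1`. -/
lemma chain_deriv {φ : E → E} {ρO : ℝ} (hφ : ContDiffOn ℝ 3 φ (ball (0:E) ρO))
    (u w : E) (hu : ‖u‖ < ρO) {k : ℕ} (hk : (k : WithTop ℕ∞) ≤ 3) {t : ℝ}
    (ht : t ∈ Icc (0:ℝ) 1) :
    iteratedDerivWithin k (fun t : ℝ => ⟪w, φ (t • u)⟫) (Icc 0 1) t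
      = ⟪w, iteratedFDeriv ℝ k φ (t • u) (fun _ => u)⟫ := by
  set O := ball (0:E) ρO with hO
  have hOopen : IsOpen O := isOpen_ball
  set Lu : ℝ →L[ℝ] E := ContinuousLinearMap.toSpanSingleton ℝ u with hLu
  have hLuapp : ∀ s : ℝ, Lu s = s • u := fun s => rfl
  set G : Set ℝ := Lu ⁻¹' O with hG
  have hGopen : IsOpen G := hOopen.preimage Lu.continuous
  have hGu : UniqueDiffOn ℝ G := hGopen.uniqueDiffOn
  have hIccG : Icc (0:ℝ) 1 ⊆ G := by
    intro s hs
    have : ‖s • u‖ < ρO := by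
      rw [norm_smul]
      calc ‖s‖ * ‖u‖ ≤ 1 * ‖u‖ := by
            apply mul_le_mul_of_nonneg_right _ (norm_nonneg u)
            rw [Real.norm_eq_abs, abs_le]; exact ⟨by linarith [hs.1], hs.2⟩
        _ = ‖u‖ := one_mul _
        _ < ρO := hu
    exact mem_ball_zero_iff.mpr this
  have htG : t ∈ G := hIccG ht
  have htO : Lu t ∈ O := htG
  have hcomp : ContDiffOn ℝ 3 (φ ∘ Lu) G :=
    hφ.comp Lu.contDiff.contDiffOn (fun x hx => hx)
  have e1 : (fun t : ℝ => ⟪w, φ (t • u)⟫) = (innerSL ℝ w) ∘ (φ ∘ Lu) := rfl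
  rw [iteratedDerivWithin_eq_iteratedFDerivWithin, e1,
    itFDW_subset (((innerSL ℝ w).contDiff).comp_contDiffOn hcomp) hIccG
      (uniqueDiffOn_Icc one_pos) hGu ht hk,
    (innerSL ℝ w).iteratedFDerivWithin_comp_left (hcomp.contDiffWithinAt htG) hGu htG hk]
  have e2 : iteratedFDerivWithin ℝ k (φ ∘ Lu) G t
      = (iteratedFDerivWithin ℝ k φ O (Lu t)).compContinuousLinearMap fun _ => Lu :=
    Lu.iteratedFDerivWithin_comp_right hφ hOopen.uniqueDiffOn hGu htO hk
  rw [ContinuousLinearMap.compContinuousMultilinearMap_coe, Function.comp_apply, e2,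
    ContinuousMultilinearMap.compContinuousLinearMap_apply,
    iteratedFDerivWithin_of_isOpen k hOopen htO]
  simp [hLuapp, innerSL_apply_apply]

lemma key_taylor {φ : E → E} {ρO ρ2 ε : ℝ} (hρO : ρ2 < ρO) (hε : 0 ≤ ε)
    (hφ : ContDiffOn ℝ 3 φ (ball (0:E) ρO))
    (hbnd : ∀ x ∈ closedBall (0:E) ρ2, ‖iteratedFDeriv ℝ 3 φ x - iteratedFDeriv ℝ 3 φ 0‖ ≤ ε)
    (u w : E) (hu : ‖u‖ ≤ ρ2) {t : ℝ} (ht : t ∈ Icc (0:ℝ) 1) :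
    |⟪w, φ (t • u)⟫ - ⟪w, φ 0⟫ - t * ⟪w, fderiv ℝ φ 0 u⟫
      - t^2/2 * ⟪w, fderiv ℝ (fderiv ℝ φ) 0 u u⟫
      - t^3/6 * ⟪w, iteratedFDeriv ℝ 3 φ 0 (fun _ => u)⟫|
    ≤ ε/2 * ‖u‖^3 * ‖w‖ * t^3 := by
  have hu' : ‖u‖ < ρO := lt_of_le_of_lt hu hρO
  set a : ℝ := ⟪w, iteratedFDeriv ℝ 3 φ 0 (fun _ => u)⟫ with ha
  set F : ℝ → ℝ := fun t => ⟪w, φ (t • u)⟫ with hF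
  set p : ℝ → ℝ := fun t => a/6 * t^3 with hp
  have hpc : ∀ n : WithTop ℕ∞, ContDiff ℝ n p :=
    fun n => contDiff_const.mul (contDiff_id.pow 3)
  have e1 : deriv p = fun x : ℝ => a/2 * x^2 := by
    funext x
    have := ((hasDerivAt_pow 3 x).const_mul (a/6)).deriv
    rw [hp, this]; push_cast; ring
  have e2 : deriv (fun x : ℝ => a/2 * x^2) = fun x : ℝ => a * x := by
    funext x
    have := ((hasDerivAt_pow 2 x).const_mul (a/2)).deriv
    rw [this]; push_cast; ring
  have e3 : deriv (fun x : ℝ => a * x) = fun _ : ℝ => a := by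
    funext x
    simpa using ((hasDerivAt_id x).const_mul a).deriv
  have hp3 : ∀ x : ℝ, iteratedDeriv 3 p x = a := by
    intro x
    rw [show (3:ℕ) = 2+1 from rfl, iteratedDeriv_succ, show (2:ℕ) = 1+1 from rfl,
      iteratedDeriv_succ, iteratedDeriv_one, e1, e2, e3]
  have hmaps : ∀ s : ℝ, s ∈ Icc (0:ℝ) 1 → s • u ∈ ball (0:E) ρO := by
    intro s hs
    rw [mem_ball_zero_iff, norm_smul]
    calc ‖s‖ * ‖u‖ ≤ 1 * ‖u‖ := by
          apply mul_le_mul_of_nonneg_right _ (norm_nonneg u)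
          rw [Real.norm_eq_abs, abs_le]; exact ⟨by linarith [hs.1], hs.2⟩
      _ = ‖u‖ := one_mul _
      _ < ρO := hu'
  have hFc : ContDiffOn ℝ 3 F (Icc (0:ℝ) 1) := by
    refine (innerSL ℝ w).contDiff.comp_contDiffOn ?_
    exact hφ.comp ((contDiff_id.smul contDiff_const).contDiffOn) hmaps
  have hsub : ∀ (k : ℕ), (k : WithTop ℕ∞) ≤ 3 → ∀ t ∈ Icc (0:ℝ) 1,
      iteratedDerivWithin k (F - p) (Icc 0 1) t
        = ⟪w, iteratedFDeriv ℝ k φ (t • u) (fun _ => u)⟫ - iteratedDeriv k p t := by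
    intro k hk t ht
    rw [iteratedDerivWithin_sub ht (uniqueDiffOn_Icc one_pos) ((hFc.of_le hk).contDiffWithinAt ht)
        ((hpc k).contDiffWithinAt),
      chain_deriv hφ u w hu' hk ht, itDW_eq_itD (hpc k) le_rfl (uniqueDiffOn_Icc one_pos) ht]
  have hFp3 : ContDiffOn ℝ ((2:ℕ) + 1) (F - p) (Icc (0:ℝ) 1) := by
    have : ContDiffOn ℝ 3 (F - p) (Icc (0:ℝ) 1) := hFc.sub ((hpc 3).contDiffOn)
    exact_mod_cast this
  have hC : ∀ y ∈ Icc (0:ℝ) 1,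
      ‖iteratedDerivWithin 3 (F - p) (Icc 0 1) y‖ ≤ ε * ‖u‖^3 * ‖w‖ := by
    intro y hy
    rw [hsub 3 le_rfl y hy, hp3 y, ha, ← inner_sub_right]
    have h1 : ‖iteratedFDeriv ℝ 3 φ (y • u) (fun _ => u)
        - iteratedFDeriv ℝ 3 φ 0 (fun _ => u)‖ ≤ ε * ‖u‖^3 := by
      rw [← ContinuousMultilinearMap.sub_apply]
      calc ‖(iteratedFDeriv ℝ 3 φ (y • u) - iteratedFDeriv ℝ 3 φ 0) (fun _ => u)‖
          ≤ ‖iteratedFDeriv ℝ 3 φ (y • u) - iteratedFDeriv ℝ 3 φ 0‖ * ∏ _i : Fin 3, ‖u‖ :=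
            ContinuousMultilinearMap.le_opNorm _ _
        _ ≤ ε * ‖u‖^3 := by
            rw [Finset.prod_const]
            simp only [Finset.card_univ, Fintype.card_fin]
            apply mul_le_mul_of_nonneg_right _ (by positivity)
            apply hbnd
            rw [mem_closedBall_zero_iff, norm_smul]
            calc ‖y‖ * ‖u‖ ≤ 1 * ‖u‖ := by
                  apply mul_le_mul_of_nonneg_right _ (norm_nonneg u)
                  rw [Real.norm_eq_abs, abs_le]; exact ⟨by linarith [hy.1], hy.2⟩
              _ = ‖u‖ := one_mul _
              _ ≤ ρ2 := hu
    calc ‖⟪w, iteratedFDeriv ℝ 3 φ (y • u) (fun _ => u)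
            - iteratedFDeriv ℝ 3 φ 0 (fun _ => u)⟫‖
        ≤ ‖w‖ * ‖iteratedFDeriv ℝ 3 φ (y • u) (fun _ => u)
            - iteratedFDeriv ℝ 3 φ 0 (fun _ => u)‖ := norm_inner_le_norm _ _
      _ ≤ ‖w‖ * (ε * ‖u‖^3) := by
          apply mul_le_mul_of_nonneg_left h1 (norm_nonneg w)
      _ = ε * ‖u‖^3 * ‖w‖ := by ring
  have hT := taylor_mean_remainder_bound (f := F - p) (n := 2) zero_le_one hFp3 ht hC
  have hTP : taylorWithinEval (F - p) 2 (Icc (0:ℝ) 1) 0 t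
      = ⟪w, φ 0⟫ + t * ⟪w, fderiv ℝ φ 0 u⟫
        + t^2/2 * ⟪w, fderiv ℝ (fderiv ℝ φ) 0 u u⟫ := by
    have h0 : (0:ℝ) ∈ Icc (0:ℝ) 1 := ⟨le_rfl, zero_le_one⟩
    rw [taylor_within_apply]
    rw [Finset.sum_range_succ, Finset.sum_range_succ, Finset.sum_range_one]
    rw [hsub 0 (by norm_num) 0 h0, hsub 1 (by norm_num) 0 h0, hsub 2 (by norm_num) 0 h0]
    rw [iteratedFDeriv_one_apply, iteratedFDeriv_two_apply]
    simp only [iteratedDeriv_zero, iteratedDeriv_one, e1,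
      iteratedFDeriv_zero_apply, zero_smul]
    rw [show iteratedDeriv 2 p 0 = 0 by
      rw [show (2:ℕ) = 1+1 from rfl, iteratedDeriv_succ, iteratedDeriv_one, e1, e2]; ring]
    simp only [hp, smul_eq_mul, Nat.factorial]
    push_cast
    ring
  calc |⟪w, φ (t • u)⟫ - ⟪w, φ 0⟫ - t * ⟪w, fderiv ℝ φ 0 u⟫
      - t^2/2 * ⟪w, fderiv ℝ (fderiv ℝ φ) 0 u u⟫ - t^3/6 * a|
      = ‖(F - p) t - taylorWithinEval (F - p) 2 (Icc (0:ℝ) 1) 0 t‖ := by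
        rw [Real.norm_eq_abs, hTP]
        congr 1
        simp only [Pi.sub_apply, hF, hp]
        ring
    _ ≤ ε * ‖u‖^3 * ‖w‖ * (t - 0)^(2+1) / (2:ℕ).factorial := hT
    _ = ε/2 * ‖u‖^3 * ‖w‖ * t^3 := by
        norm_num [Nat.factorial]
        ring
end KT

/-- on the null space of the Hessian, the gradient's null-space component
is of exact order three: `c‖u‖³ ≤ ‖Q∇f(u)‖ ≤ C‖u‖³` for small `u ∈ Null(∇²f(0))`. -/
theorem null_gradient_cubic_order
    {d : ℕ} (f : EuclideanSpace ℝ (Fin d) → ℝ)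
    (hf : ContDiffAt ℝ 4 f 0) (hf0 : f 0 = 0) (hg0 : ∇ f 0 = 0)
    (m₀ ρ₀ : ℝ) (hm₀ : 0 < m₀) (hρ₀ : 0 < ρ₀)
    (hgrowth : ∀ x : EuclideanSpace ℝ (Fin d), ‖x‖ ≤ ρ₀ → m₀ * ‖x‖ ^ 4 ≤ f x) :
    ∃ c > 0, ∃ C > 0, ∃ r > 0, ∀ u : EuclideanSpace ℝ (Fin d),
      fderiv ℝ (∇ f) 0 u = 0 → ‖u‖ ≤ r →
      letI K := LinearMap.ker (fderiv ℝ (∇ f) 0).toLinearMap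
      letI Q : EuclideanSpace ℝ (Fin d) →L[ℝ] EuclideanSpace ℝ (Fin d) :=
        K.subtypeL.comp K.orthogonalProjectionOnto
      c * ‖u‖ ^ 3 ≤ ‖Q (∇ f u)‖ ∧ ‖Q (∇ f u)‖ ≤ C * ‖u‖ ^ 3 := by
  classical
  have hinner : ∀ (x v : EuclideanSpace ℝ (Fin d)), ⟪∇ f x, v⟫ = fderiv ℝ f x v :=
    fun x v => InnerProductSpace.toDual_symm_apply
  -- neighborhood of smoothness
  obtain ⟨U, hU, hfU⟩ := hf.contDiffOn (m := 4) le_rfl (by simp)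
  obtain ⟨ρO, hρOpos, hballU⟩ : ∃ ε > 0, ball (0 : EuclideanSpace ℝ (Fin d)) ε ⊆ U :=
    Metric.mem_nhds_iff.mp hU
  set O := ball (0 : EuclideanSpace ℝ (Fin d)) ρO with hOdef
  have hOopen : IsOpen O := isOpen_ball
  have h0O : (0 : EuclideanSpace ℝ (Fin d)) ∈ O := mem_ball_self hρOpos
  have hfO : ContDiffOn ℝ 4 f O := hfU.mono hballU
  have hf'O : ContDiffOn ℝ 3 (fderiv ℝ f) O := hfO.fderiv_of_isOpen hOopen (by norm_num)
  have hφO : ContDiffOn ℝ 3 (∇ f) O := by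
    have h : (∇ f) = fun x => (InnerProductSpace.toDual ℝ (EuclideanSpace ℝ (Fin d))).symm
        (fderiv ℝ f x) := rfl
    rw [h]
    exact ((InnerProductSpace.toDual ℝ (EuclideanSpace ℝ (Fin d))).symm.contDiff).comp_contDiffOn
      hf'O
  have hφ'O : ContDiffOn ℝ 2 (fderiv ℝ (∇ f)) O := hφO.fderiv_of_isOpen hOopen (by norm_num)
  -- differentiability facts
  have hfAt : ∀ x ∈ O, DifferentiableAt ℝ f x := fun x hx =>
    ((hfO.contDiffAt (hOopen.mem_nhds hx)).differentiableAt (by norm_num))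
  have hf'At : ∀ x ∈ O, DifferentiableAt ℝ (fderiv ℝ f) x := fun x hx =>
    ((hf'O.contDiffAt (hOopen.mem_nhds hx)).differentiableAt (by norm_num))
  have hφAt : ∀ x ∈ O, DifferentiableAt ℝ (∇ f) x := fun x hx =>
    ((hφO.contDiffAt (hOopen.mem_nhds hx)).differentiableAt (by norm_num))
  have hφ'At : ∀ x ∈ O, DifferentiableAt ℝ (fderiv ℝ (∇ f)) x := fun x hx =>
    ((hφ'O.contDiffAt (hOopen.mem_nhds hx)).differentiableAt (by norm_num))
  -- choice of ρ2 by continuity of the third derivative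
  have hcont : ContinuousAt (iteratedFDeriv ℝ 3 (∇ f)) 0 := by
    have h1 : ContinuousOn (iteratedFDerivWithin ℝ 3 (∇ f) O) O :=
      hφO.continuousOn_iteratedFDerivWithin (by norm_num) hOopen.uniqueDiffOn
    have h2 : ContinuousOn (iteratedFDeriv ℝ 3 (∇ f)) O :=
      h1.congr fun x hx => (iteratedFDerivWithin_of_isOpen 3 hOopen hx).symm
    exact h2.continuousAt (hOopen.mem_nhds h0O)
  obtain ⟨δ, hδpos, hδ⟩ := Metric.continuousAt_iff.mp hcont m₀ hm₀
  set ρ2 := min (min (δ/2) (ρO/2)) ρ₀ with hρ2def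
  have hρ2pos : 0 < ρ2 := lt_min (lt_min (by linarith) (by linarith)) hρ₀
  have hρ2ρO : ρ2 < ρO := lt_of_le_of_lt (le_trans (min_le_left _ _) (min_le_right _ _))
    (by linarith)
  have hρ2ρ₀ : ρ2 ≤ ρ₀ := min_le_right _ _
  have hbnd : ∀ x ∈ closedBall (0 : EuclideanSpace ℝ (Fin d)) ρ2,
      ‖iteratedFDeriv ℝ 3 (∇ f) x - iteratedFDeriv ℝ 3 (∇ f) 0‖ ≤ m₀ := by
    intro x hx
    rw [mem_closedBall_zero_iff] at hx
    have : dist x 0 < δ := by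
      rw [dist_zero_right]
      exact lt_of_le_of_lt hx (lt_of_le_of_lt (le_trans (min_le_left _ _) (min_le_left _ _))
        (by linarith))
    have := hδ this
    rw [dist_eq_norm] at this
    exact this.le
  -- the Taylor estimate
  have KT : ∀ (u w : EuclideanSpace ℝ (Fin d)), ‖u‖ ≤ ρ2 → ∀ t ∈ Icc (0:ℝ) 1,
      |⟪w, ∇ f (t • u)⟫ - t * ⟪w, fderiv ℝ (∇ f) 0 u⟫
        - t^2/2 * ⟪w, fderiv ℝ (fderiv ℝ (∇ f)) 0 u u⟫
        - t^3/6 * ⟪w, iteratedFDeriv ℝ 3 (∇ f) 0 (fun _ => u)⟫|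
      ≤ m₀/2 * ‖u‖^3 * ‖w‖ * t^3 := by
    intro u w hu t ht
    have := key_taylor hρ2ρO hm₀.le hφO hbnd u w hu ht
    rwa [hg0, inner_zero_right, sub_zero] at this
  -- smallness of scaled points
  have hsmall : ∀ (u : EuclideanSpace ℝ (Fin d)), ‖u‖ ≤ ρ2 → ∀ t ∈ Icc (0:ℝ) 1,
      ‖t • u‖ ≤ ρ2 := by
    intro u hu t ht
    rw [norm_smul]
    calc ‖t‖ * ‖u‖ ≤ 1 * ‖u‖ := by
          apply mul_le_mul_of_nonneg_right _ (norm_nonneg u)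
          rw [Real.norm_eq_abs, abs_le]; exact ⟨by linarith [ht.1], ht.2⟩
      _ = ‖u‖ := one_mul _
      _ ≤ ρ2 := hu
  have hsmallO : ∀ (u : EuclideanSpace ℝ (Fin d)), ‖u‖ ≤ ρ2 → ∀ t ∈ Icc (0:ℝ) 1,
      t • u ∈ O := fun u hu t ht =>
    mem_ball_zero_iff.mpr (lt_of_le_of_lt (hsmall u hu t ht) hρ2ρO)
  -- derivative along rays
  have hDerivAt : ∀ (u : EuclideanSpace ℝ (Fin d)), ‖u‖ ≤ ρ2 → ∀ t ∈ Icc (0:ℝ) 1,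
      HasDerivAt (fun s : ℝ => f (s • u)) (⟪u, ∇ f (t • u)⟫) t := by
    intro u hu t ht
    have h1 : HasDerivAt (fun s : ℝ => s • u) u t := by
      simpa using (hasDerivAt_id t).smul_const u
    have h2 := ((hfAt _ (hsmallO u hu t ht)).hasFDerivAt).comp_hasDerivAt t h1
    have h3 : fderiv ℝ f (t • u) u = ⟪u, ∇ f (t • u)⟫ := by
      rw [← hinner, real_inner_comm]
    rw [← h3]
    exact h2
  -- continuity of the integrand
  have hcontInt : ∀ (u w : EuclideanSpace ℝ (Fin d)), ‖u‖ ≤ ρ2 →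
      ContinuousOn (fun t : ℝ => ⟪w, ∇ f (t • u)⟫) (Icc (0:ℝ) 1) := by
    intro u w hu
    apply ContinuousOn.inner continuousOn_const
    exact (hφO.continuousOn).comp ((continuous_id.smul continuous_const).continuousOn)
      (fun t ht => hsmallO u hu t ht)
  -- Step C : integral representation estimate, for u in the kernel
  have stepC : ∀ u : EuclideanSpace ℝ (Fin d), fderiv ℝ (∇ f) 0 u = 0 → ‖u‖ ≤ ρ2 →
      |f u - ⟪u, fderiv ℝ (fderiv ℝ (∇ f)) 0 u u⟫/6
        - ⟪u, iteratedFDeriv ℝ 3 (∇ f) 0 (fun _ => u)⟫/24| ≤ m₀/2 * ‖u‖^4 := by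
    intro u hu0 hur
    set b2 : ℝ := ⟪u, fderiv ℝ (fderiv ℝ (∇ f)) 0 u u⟫ with hb2
    set a3 : ℝ := ⟪u, iteratedFDeriv ℝ 3 (∇ f) 0 (fun _ => u)⟫ with ha3
    set ψ : ℝ → ℝ := fun t => ⟪u, ∇ f (t • u)⟫ with hψ
    set P : ℝ → ℝ := fun t => b2/2 * t^2 + a3/6 * t^3 with hP
    have hψc : ContinuousOn ψ (Icc (0:ℝ) 1) := hcontInt u u hur
    have hψint : IntervalIntegrable ψ MeasureTheory.volume 0 1 := by
      apply ContinuousOn.intervalIntegrable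
      rwa [uIcc_of_le zero_le_one]
    have hPint : IntervalIntegrable P MeasureTheory.volume 0 1 := by
      exact ((continuous_const.mul (continuous_pow 2)).add
        (continuous_const.mul (continuous_pow 3))).intervalIntegrable _ _
    have hfu : ∫ t in (0:ℝ)..1, ψ t = f u := by
      have := intervalIntegral.integral_eq_sub_of_hasDerivAt
        (f := fun s : ℝ => f (s • u)) (f' := ψ)
        (fun t ht => hDerivAt u hur t (by rwa [uIcc_of_le zero_le_one] at ht)) hψint
      simp only [one_smul, zero_smul, hf0, sub_zero] at this
      exact this
    have hPval : ∫ t in (0:ℝ)..1, P t = b2/6 + a3/24 := by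
      rw [hP]
      rw [intervalIntegral.integral_add (f := fun t : ℝ => b2/2 * t^2)
        (g := fun t : ℝ => a3/6 * t^3)
        ((continuous_const.mul (continuous_pow 2)).intervalIntegrable _ _)
        ((continuous_const.mul (continuous_pow 3)).intervalIntegrable _ _),
        intervalIntegral.integral_const_mul, intervalIntegral.integral_const_mul,
        integral_pow, integral_pow]
      norm_num
      ring
    have hdiff : f u - (b2/6 + a3/24) = ∫ t in (0:ℝ)..1, (ψ t - P t) := by
      rw [intervalIntegral.integral_sub hψint hPint, hfu, hPval]
    have hbound : |f u - (b2/6 + a3/24)| ≤ m₀/2 * ‖u‖^4 := by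
      rw [hdiff, ← Real.norm_eq_abs]
      have := intervalIntegral.norm_integral_le_of_norm_le_const
        (C := m₀/2 * ‖u‖^4) (f := fun t => ψ t - P t) (a := 0) (b := 1) ?_
      · simpa using this
      · intro t ht
        rw [uIoc_of_le zero_le_one] at ht
        have ht' : t ∈ Icc (0:ℝ) 1 := ⟨ht.1.le, ht.2⟩
        have hKT := KT u u hur t ht'
        rw [hu0, inner_zero_right] at hKT
        have habs : |ψ t - P t| ≤ m₀/2 * ‖u‖^3 * ‖u‖ * t^3 := by
          have : ψ t - P t = ⟪u, ∇ f (t • u)⟫ - t * 0 - t^2/2 * b2 - t^3/6 * a3 := by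
            rw [hψ, hP]; ring
          rw [this]
          exact hKT
        rw [Real.norm_eq_abs]
        calc |ψ t - P t| ≤ m₀/2 * ‖u‖^3 * ‖u‖ * t^3 := habs
          _ ≤ m₀/2 * ‖u‖^3 * ‖u‖ * 1 := by
              apply mul_le_mul_of_nonneg_left _ (by positivity)
              calc t^3 ≤ 1^3 := by
                    apply pow_le_pow_left₀ ht.1.le ht'.2
                _ = 1 := one_pow 3
          _ = m₀/2 * ‖u‖^4 := by ring
    calc |f u - b2/6 - a3/24| = |f u - (b2/6 + a3/24)| := by ring_nf
      _ ≤ m₀/2 * ‖u‖^4 := hbound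
  -- Step D : the cubic coefficient vanishes on the kernel
  have hBnonneg : ∀ u : EuclideanSpace ℝ (Fin d), fderiv ℝ (∇ f) 0 u = 0 → ‖u‖ ≤ ρ2 →
      0 ≤ ⟪u, fderiv ℝ (fderiv ℝ (∇ f)) 0 u u⟫ := by
    intro u hu0 hur
    set b2 : ℝ := ⟪u, fderiv ℝ (fderiv ℝ (∇ f)) 0 u u⟫ with hb2
    set a3 : ℝ := ⟪u, iteratedFDeriv ℝ 3 (∇ f) 0 (fun _ => u)⟫ with ha3
    set X : ℝ := m₀ * ‖u‖^4 - a3/24 - m₀/2 * ‖u‖^4 with hX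
    have hτ : ∀ τ : ℝ, τ ∈ Ioc (0:ℝ) 1 → τ * X ≤ b2/6 := by
      intro τ hτmem
      obtain ⟨hτpos, hτ1⟩ := hτmem
      have hτu0 : fderiv ℝ (∇ f) 0 (τ • u) = 0 := by rw [map_smul, hu0, smul_zero]
      have hτur : ‖τ • u‖ ≤ ρ2 := hsmall u hur τ ⟨hτpos.le, hτ1⟩
      have h1 := stepC (τ • u) hτu0 hτur
      have e1 : ⟪τ • u, fderiv ℝ (fderiv ℝ (∇ f)) 0 (τ • u) (τ • u)⟫ = τ^3 * b2 := by
        simp only [map_smul, ContinuousLinearMap.smul_apply, real_inner_smul_left,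
          real_inner_smul_right, hb2]
        ring
      have e2 : ⟪τ • u, iteratedFDeriv ℝ 3 (∇ f) 0 (fun _ => τ • u)⟫ = τ^4 * a3 := by
        have : (fun _ : Fin 3 => τ • u) = fun i : Fin 3 => τ • ((fun _ => u) i) := rfl
        rw [this, ContinuousMultilinearMap.map_smul_univ, real_inner_smul_right,
          Finset.prod_const, ha3]
        simp only [Finset.card_univ, Fintype.card_fin]
        rw [real_inner_smul_left]
        ring
      have e3 : ‖τ • u‖^4 = τ^4 * ‖u‖^4 := by
        rw [norm_smul, Real.norm_eq_abs, abs_of_pos hτpos, mul_pow]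
      rw [e1, e2, e3] at h1
      have hgr : m₀ * (τ^4 * ‖u‖^4) ≤ f (τ • u) := by
        rw [← e3]
        exact hgrowth _ (le_trans hτur hρ2ρ₀)
      have habs := abs_le.mp h1
      nlinarith [pow_pos hτpos 3, pow_pos hτpos 4, habs.1, habs.2]
    have hlim : Filter.Tendsto (fun τ : ℝ => τ * X) (𝓝[>] (0:ℝ)) (𝓝 0) := by
      have : Filter.Tendsto (fun τ : ℝ => τ * X) (𝓝 (0:ℝ)) (𝓝 (0 * X)) :=
        (continuous_id.mul continuous_const).tendsto 0
      rw [zero_mul] at this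
      exact this.mono_left nhdsWithin_le_nhds
    have h0 : (0:ℝ) ≤ b2/6 := by
      apply le_of_tendsto hlim
      filter_upwards [Ioc_mem_nhdsGT_of_mem (Set.mem_Ico.mpr ⟨le_rfl, zero_lt_one⟩)] with τ hτ'
      exact hτ τ hτ'
    linarith
  have hBzero : ∀ u : EuclideanSpace ℝ (Fin d), fderiv ℝ (∇ f) 0 u = 0 →
      ⟪u, fderiv ℝ (fderiv ℝ (∇ f)) 0 u u⟫ = 0 := by
    intro u hu0
    rcases eq_or_ne u 0 with rfl | hune
    · simp
    · have hnorm : 0 < ‖u‖ := norm_pos_iff.mpr hune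
      set c : ℝ := ρ2 / ‖u‖ with hc
      have hcpos : 0 < c := div_pos hρ2pos hnorm
      have hcn : ‖c • u‖ ≤ ρ2 := by
        rw [norm_smul, Real.norm_eq_abs, abs_of_pos hcpos, hc, div_mul_cancel₀ _ hnorm.ne']
      have hscale : ∀ v : EuclideanSpace ℝ (Fin d),
          ⟪c • v, fderiv ℝ (fderiv ℝ (∇ f)) 0 (c • v) (c • v)⟫
            = c^3 * ⟪v, fderiv ℝ (fderiv ℝ (∇ f)) 0 v v⟫ := by
        intro v
        simp only [map_smul, ContinuousLinearMap.smul_apply, real_inner_smul_left,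
          real_inner_smul_right]
        ring
      have h1 := hBnonneg (c • u) (by rw [map_smul, hu0, smul_zero]) hcn
      have h2 := hBnonneg (-(c • u)) (by rw [map_neg, map_smul, hu0, smul_zero, neg_zero])
        (by rwa [norm_neg])
      have e2 : ⟪-(c • u), fderiv ℝ (fderiv ℝ (∇ f)) 0 (-(c • u)) (-(c • u))⟫
          = -⟪c • u, fderiv ℝ (fderiv ℝ (∇ f)) 0 (c • u) (c • u)⟫ := by
        simp only [map_neg, ContinuousLinearMap.neg_apply, inner_neg_left, inner_neg_right,
          neg_neg]
      rw [e2] at h2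
      rw [hscale u] at h1 h2
      have : c^3 * ⟪u, fderiv ℝ (fderiv ℝ (∇ f)) 0 u u⟫ = 0 := le_antisymm (by linarith) h1
      have hc3 : (0:ℝ) < c^3 := pow_pos hcpos 3
      exact (mul_eq_zero.mp this).resolve_left hc3.ne'
  -- symmetry of the second derivative of the gradient
  have hBat : HasFDerivAt (fderiv ℝ (∇ f)) (fderiv ℝ (fderiv ℝ (∇ f)) 0) 0 :=
    (hφ'At 0 h0O).hasFDerivAt
  have hsymB1 : ∀ v w : EuclideanSpace ℝ (Fin d),
      fderiv ℝ (fderiv ℝ (∇ f)) 0 v w = fderiv ℝ (fderiv ℝ (∇ f)) 0 w v := by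
    have hEvφ : ∀ᶠ y in 𝓝 (0 : EuclideanSpace ℝ (Fin d)),
        HasFDerivAt (∇ f) (fderiv ℝ (∇ f) y) y := by
      filter_upwards [hOopen.mem_nhds h0O] with y hy
      exact (hφAt y hy).hasFDerivAt
    exact second_derivative_symmetric_of_eventually hEvφ hBat
  -- self-adjointness of the Hessian on O
  have hselfadj : ∀ x ∈ O, ∀ v w : EuclideanSpace ℝ (Fin d),
      ⟪w, fderiv ℝ (∇ f) x v⟫ = ⟪v, fderiv ℝ (∇ f) x w⟫ := by
    intro x hx v w
    have hev : ∀ᶠ y in 𝓝 x, HasFDerivAt f (fderiv ℝ f y) y := by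
      filter_upwards [hOopen.mem_nhds hx] with y hy
      exact (hfAt y hy).hasFDerivAt
    have hf''x : HasFDerivAt (fderiv ℝ f) (fderiv ℝ (fderiv ℝ f) x) x :=
      (hf'At x hx).hasFDerivAt
    have hsym := second_derivative_symmetric_of_eventually hev hf''x
    -- ⟪a, fderiv (∇f) x b⟫ = f'' x b a
    have key : ∀ a b : EuclideanSpace ℝ (Fin d),
        ⟪a, fderiv ℝ (∇ f) x b⟫ = fderiv ℝ (fderiv ℝ f) x b a := by
      intro a b
      have hq1 : HasFDerivAt (fun y => ⟪a, ∇ f y⟫)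
          ((innerSL ℝ a).comp (fderiv ℝ (∇ f) x)) x :=
        (innerSL ℝ a).hasFDerivAt.comp x (hφAt x hx).hasFDerivAt
      have hq2 : HasFDerivAt (fun y => fderiv ℝ f y a)
          ((ContinuousLinearMap.apply ℝ ℝ a).comp (fderiv ℝ (fderiv ℝ f) x)) x :=
        (ContinuousLinearMap.apply ℝ ℝ a).hasFDerivAt.comp x hf''x
      have hfuneq : (fun y => ⟪a, ∇ f y⟫) = (fun y => fderiv ℝ f y a) := by
        funext y
        rw [real_inner_comm, hinner]
      rw [hfuneq] at hq1
      have := hq1.unique hq2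
      calc ⟪a, fderiv ℝ (∇ f) x b⟫
          = ((innerSL ℝ a).comp (fderiv ℝ (∇ f) x)) b := rfl
        _ = ((ContinuousLinearMap.apply ℝ ℝ a).comp (fderiv ℝ (fderiv ℝ f) x)) b := by rw [this]
        _ = fderiv ℝ (fderiv ℝ f) x b a := rfl
    rw [key w v, key v w]
    exact hsym v w
  -- full symmetry in the last two arguments
  have hsymB2 : ∀ a v w : EuclideanSpace ℝ (Fin d),
      ⟪w, fderiv ℝ (fderiv ℝ (∇ f)) 0 a v⟫ = ⟪v, fderiv ℝ (fderiv ℝ (∇ f)) 0 a w⟫ := by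
    intro a v w
    set c1 : (EuclideanSpace ℝ (Fin d) →L[ℝ] EuclideanSpace ℝ (Fin d)) →L[ℝ] ℝ :=
      (innerSL ℝ w).comp (ContinuousLinearMap.apply ℝ (EuclideanSpace ℝ (Fin d)) v) with hc1
    set c2 : (EuclideanSpace ℝ (Fin d) →L[ℝ] EuclideanSpace ℝ (Fin d)) →L[ℝ] ℝ :=
      (innerSL ℝ v).comp (ContinuousLinearMap.apply ℝ (EuclideanSpace ℝ (Fin d)) w) with hc2
    have h1 : HasFDerivAt (fun x => ⟪w, fderiv ℝ (∇ f) x v⟫)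
        (c1.comp (fderiv ℝ (fderiv ℝ (∇ f)) 0)) 0 := c1.hasFDerivAt.comp 0 hBat
    have h2 : HasFDerivAt (fun x => ⟪v, fderiv ℝ (∇ f) x w⟫)
        (c2.comp (fderiv ℝ (fderiv ℝ (∇ f)) 0)) 0 := c2.hasFDerivAt.comp 0 hBat
    have heq : (fun x => ⟪w, fderiv ℝ (∇ f) x v⟫)
        =ᶠ[𝓝 (0 : EuclideanSpace ℝ (Fin d))] (fun x => ⟪v, fderiv ℝ (∇ f) x w⟫) := by
      filter_upwards [hOopen.mem_nhds h0O] with x hx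
      exact hselfadj x hx v w
    have hder : c1.comp (fderiv ℝ (fderiv ℝ (∇ f)) 0)
        = c2.comp (fderiv ℝ (fderiv ℝ (∇ f)) 0) := by
      rw [← h1.fderiv, ← h2.fderiv]
      exact heq.fderiv_eq
    calc ⟪w, fderiv ℝ (fderiv ℝ (∇ f)) 0 a v⟫
        = (c1.comp (fderiv ℝ (fderiv ℝ (∇ f)) 0)) a := rfl
      _ = (c2.comp (fderiv ℝ (fderiv ℝ (∇ f)) 0)) a := by rw [hder]
      _ = ⟪v, fderiv ℝ (fderiv ℝ (∇ f)) 0 a w⟫ := rfl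
  -- polarization: the cubic form vanishes for pairs in the kernel
  have hBpol : ∀ u w : EuclideanSpace ℝ (Fin d), fderiv ℝ (∇ f) 0 u = 0 →
      fderiv ℝ (∇ f) 0 w = 0 → ⟪w, fderiv ℝ (fderiv ℝ (∇ f)) 0 u u⟫ = 0 := by
    intro u w hu hw
    have h1 := hBzero (u + w) (by rw [map_add, hu, hw, add_zero])
    have h2 := hBzero (u - w) (by rw [map_sub, hu, hw, sub_zero])
    have h3 := hBzero u hu
    have h4 := hBzero w hw
    have m1 : ⟪u, fderiv ℝ (fderiv ℝ (∇ f)) 0 u w⟫ = ⟪w, fderiv ℝ (fderiv ℝ (∇ f)) 0 u u⟫ :=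
      (hsymB2 u u w).symm
    have m2 : ⟪u, fderiv ℝ (fderiv ℝ (∇ f)) 0 w u⟫ = ⟪u, fderiv ℝ (fderiv ℝ (∇ f)) 0 u w⟫ := by
      rw [hsymB1 w u]
    have m3 : ⟪w, fderiv ℝ (fderiv ℝ (∇ f)) 0 w u⟫ = ⟪u, fderiv ℝ (fderiv ℝ (∇ f)) 0 w w⟫ :=
      hsymB2 w u w
    have m4 : ⟪w, fderiv ℝ (fderiv ℝ (∇ f)) 0 u w⟫ = ⟪w, fderiv ℝ (fderiv ℝ (∇ f)) 0 w u⟫ := by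
      rw [hsymB1 u w]
    simp only [map_add, map_sub, ContinuousLinearMap.add_apply, ContinuousLinearMap.sub_apply,
      inner_add_left, inner_add_right, inner_sub_left, inner_sub_right] at h1 h2
    linarith
  -- final assembly
  refine ⟨m₀, hm₀, ‖iteratedFDeriv ℝ 3 (∇ f) 0‖/6 + m₀, by positivity, ρ2, hρ2pos, ?_⟩
  intro u hu0 hur
  have huK : u ∈ LinearMap.ker (fderiv ℝ (∇ f) 0).toLinearMap := LinearMap.mem_ker.mpr hu0
  set K := LinearMap.ker (fderiv ℝ (∇ f) 0).toLinearMap with hK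
  set Q : EuclideanSpace ℝ (Fin d) →L[ℝ] EuclideanSpace ℝ (Fin d) :=
    K.subtypeL.comp K.orthogonalProjectionOnto with hQ
  have hQapp : ∀ x : EuclideanSpace ℝ (Fin d), Q x = (K.orthogonalProjectionOnto x : _) := fun x => rfl
  have hQmem : ∀ x : EuclideanSpace ℝ (Fin d), fderiv ℝ (∇ f) 0 (Q x) = 0 := fun x =>
    LinearMap.mem_ker.mp (by rw [hQapp]; exact Submodule.coe_mem _)
  have hQu : Q u = u := by rw [hQapp]; exact Submodule.starProjection_eq_self_iff.mpr huK
  have hQself : ∀ x y : EuclideanSpace ℝ (Fin d), ⟪Q x, y⟫ = ⟪x, Q y⟫ := by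
    intro x y
    rw [hQapp, hQapp]
    exact Submodule.inner_starProjection_left_eq_right (K := K) x y
  have hQsq : ∀ x : EuclideanSpace ℝ (Fin d), ⟪Q x, x⟫ = ‖Q x‖^2 := by
    intro x
    have hperp : x - Q x ∈ Kᗮ := by rw [hQapp]; exact Submodule.sub_starProjection_mem_orthogonal (K := K) x
    have hmem : Q x ∈ K := by rw [hQapp]; exact Submodule.coe_mem _
    have : ⟪Q x, x - Q x⟫ = 0 := Submodule.inner_right_of_mem_orthogonal hmem hperp
    have hsplit : ⟪Q x, x⟫ = ⟪Q x, Q x⟫ + ⟪Q x, x - Q x⟫ := by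
      rw [← inner_add_right]; congr 1; abel
    rw [hsplit, this, add_zero, real_inner_self_eq_norm_sq]
  set y : EuclideanSpace ℝ (Fin d) := Q (∇ f u) with hy
  have hyK : fderiv ℝ (∇ f) 0 y = 0 := hQmem _
  have hone : (1:ℝ) ∈ Icc (0:ℝ) 1 := ⟨zero_le_one, le_rfl⟩
  have hC3bound : ∀ w : EuclideanSpace ℝ (Fin d),
      |⟪w, iteratedFDeriv ℝ 3 (∇ f) 0 (fun _ => u)⟫|
        ≤ ‖iteratedFDeriv ℝ 3 (∇ f) 0‖ * ‖u‖^3 * ‖w‖ := by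
    intro w
    calc |⟪w, iteratedFDeriv ℝ 3 (∇ f) 0 (fun _ => u)⟫|
        ≤ ‖w‖ * ‖iteratedFDeriv ℝ 3 (∇ f) 0 (fun _ => u)‖ := abs_real_inner_le_norm _ _
      _ ≤ ‖w‖ * (‖iteratedFDeriv ℝ 3 (∇ f) 0‖ * ‖u‖^3) := by
          apply mul_le_mul_of_nonneg_left _ (norm_nonneg w)
          calc ‖iteratedFDeriv ℝ 3 (∇ f) 0 (fun _ => u)‖
              ≤ ‖iteratedFDeriv ℝ 3 (∇ f) 0‖ * ∏ _i : Fin 3, ‖u‖ :=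
                ContinuousMultilinearMap.le_opNorm _ _
            _ = ‖iteratedFDeriv ℝ 3 (∇ f) 0‖ * ‖u‖^3 := by
                rw [Finset.prod_const]
                simp [Finset.card_univ, Fintype.card_fin]
      _ = ‖iteratedFDeriv ℝ 3 (∇ f) 0‖ * ‖u‖^3 * ‖w‖ := by ring
  -- upper bound
  have hupper : ‖y‖ ≤ (‖iteratedFDeriv ℝ 3 (∇ f) 0‖/6 + m₀) * ‖u‖^3 := by
    have hKTy := KT u y hur 1 hone
    rw [one_smul, hu0, inner_zero_right, hBpol u y hu0 hyK] at hKTy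
    have hyinner : ⟪y, ∇ f u⟫ = ‖y‖^2 := by
      rw [hy, real_inner_comm]
      have := hQsq (∇ f u)
      rwa [real_inner_comm] at this
    have h5 := abs_le.mp hKTy
    have h6 := abs_le.mp (hC3bound y)
    have hsq : ‖y‖^2 ≤ (‖iteratedFDeriv ℝ 3 (∇ f) 0‖/6 + m₀) * ‖u‖^3 * ‖y‖ := by
      nlinarith [h5.1, h5.2, h6.1, h6.2, hyinner, hm₀.le, norm_nonneg y,
        pow_nonneg (norm_nonneg u) 3]
    rcases eq_or_lt_of_le (norm_nonneg y) with h | h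
    · rw [← h]; positivity
    · nlinarith [hsq, h]
  -- lower bound
  have hlower : m₀ * ‖u‖^3 ≤ ‖y‖ := by
    rcases eq_or_ne u 0 with rfl | hune
    · simp
    · have hnorm : 0 < ‖u‖ := norm_pos_iff.mpr hune
      -- the quartic coefficient is large
      have hsc := stepC u hu0 hur
      rw [hBzero u hu0] at hsc
      have hgr := hgrowth u (le_trans hur hρ2ρ₀)
      have hscabs := abs_le.mp hsc
      have ha3 : 12 * m₀ * ‖u‖^4 ≤ ⟪u, iteratedFDeriv ℝ 3 (∇ f) 0 (fun _ => u)⟫ := by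
        nlinarith [hscabs.1, hscabs.2, pow_nonneg (norm_nonneg u) 4]
      have hKTu := KT u u hur 1 hone
      rw [one_smul, hu0, inner_zero_right, hBzero u hu0] at hKTu
      have h5 := abs_le.mp hKTu
      have hinf : m₀ * ‖u‖^4 ≤ ⟪u, ∇ f u⟫ := by
        nlinarith [h5.1, h5.2, pow_nonneg (norm_nonneg u) 4]
      have hcs : ⟪u, ∇ f u⟫ ≤ ‖u‖ * ‖y‖ := by
        calc ⟪u, ∇ f u⟫ = ⟪Q u, ∇ f u⟫ := by rw [hQu]
          _ = ⟪u, y⟫ := by rw [hQself, hy]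
          _ ≤ ‖u‖ * ‖y‖ := real_inner_le_norm u y
      have h7 : m₀ * ‖u‖^4 ≤ ‖u‖ * ‖y‖ := le_trans hinf hcs
      nlinarith [h7, hnorm]
  exact ⟨hlower, hupper⟩
end
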